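/- Let N ≤ M be cyclic right R-modules, π_M : R → M an epimorphism, and ε : N ↪ M the embedding. Then π_M^{-1}(N) ≅ R as right R-modules if and only if there exist a monomorphism λ : R → R and an epimorphism π_N : R → N such that π_M ∘ λ = ε ∘ π_N and λ(ker π_N) = ker π_M. -/

import Mathlib

/-!
If `π_M ∘ λ = ε ∘ π_N` with `π_N` onto and `λ(ker π_N) = ker π_M`, then the range of `λ` is exactly
`π_M⁻¹(N)`, so the monomorphism `λ` corestricts to `R ≅ π_M⁻¹(N)`. Conversely, an isomorphism
`e : π_M⁻¹(N) ≅ R` gives `λ = ι ∘ e⁻¹` and `π_N = π_M|_{π_M⁻¹(N)} ∘ e⁻¹`, where `ι` is the inclusion.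
-/

open Submodule LinearMap Function

section

variable {S A B M : Type*} [Ring S] [AddCommGroup A] [Module S A] [AddCommMonoid B] [Module S B]
  [AddCommGroup M] [Module S M] {f : A →ₗ[S] M} {N : Submodule S M}

theorem LinearMap.ker_submoduleComap :
    ker (f.submoduleComap N) = comap (N.comap f).subtype (ker f) := by
  ext x
  simp [Subtype.ext_iff]

theorem LinearMap.map_subtype_ker_submoduleComap :
    map (N.comap f).subtype (ker (f.submoduleComap N)) = ker f := by
  rw [ker_submoduleComap, map_comap_subtype, inf_eq_right]
  exact comap_mono bot_le

theorem exists_factorization_of_comap_linearEquiv (hf : Surjective f) (e : N.comap f ≃ₗ[S] B) :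
    ∃ (lam : B →ₗ[S] A) (πN : B →ₗ[S] N), Injective lam ∧ Surjective πN ∧
      f ∘ₗ lam = N.subtype ∘ₗ πN ∧ map lam (ker πN) = ker f := by
  refine ⟨(N.comap f).subtype ∘ₗ e.symm, f.submoduleComap N ∘ₗ e.symm,
    (N.comap f).injective_subtype.comp e.symm.injective,
    (f.submoduleComap_surjective_of_surjective N hf).comp e.symm.surjective, rfl, ?_⟩
  rw [ker_comp, map_comp, map_comap_eq_of_surjective e.symm.surjective,
    map_subtype_ker_submoduleComap]

theorem range_eq_comap_of_comp_eq {lam : B →ₗ[S] A} {πN : B →ₗ[S] N} (hπN : Surjective πN)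
    (hcomm : f ∘ₗ lam = N.subtype ∘ₗ πN) (hker : map lam (ker πN) = ker f) :
    range lam = N.comap f := by
  have hcomm_apply (b : B) : f (lam b) = πN b := LinearMap.congr_fun hcomm b
  refine le_antisymm ?_ fun a ha => ?_
  · rintro _ ⟨b, rfl⟩
    simp [hcomm_apply]
  · obtain ⟨b, hb⟩ := hπN ⟨f a, ha⟩
    have hdiff : a - lam b ∈ map lam (ker πN) := by
      rw [hker, mem_ker, map_sub, hcomm_apply, hb, sub_self]
    obtain ⟨c, -, hc⟩ := hdiff
    exact ⟨b + c, by rw [map_add, hc, add_sub_cancel]⟩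

end

theorem stmt_6 {R : Type*} [Ring R]
    {M : Type*} [AddCommGroup M] [Module Rᵐᵒᵖ M]
    (N : Submodule Rᵐᵒᵖ M)
    (πM : R →ₗ[Rᵐᵒᵖ] M) (hπM : Surjective πM) :
    Nonempty (↥(Submodule.comap πM N) ≃ₗ[Rᵐᵒᵖ] R) ↔
      ∃ (lam : R →ₗ[Rᵐᵒᵖ] R) (πN : R →ₗ[Rᵐᵒᵖ] ↥N),
        Injective lam ∧ Surjective πN ∧
        πM ∘ₗ lam = N.subtype ∘ₗ πN ∧
        Submodule.map lam (LinearMap.ker πN) = LinearMap.ker πM := by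
  refine ⟨fun ⟨e⟩ => exists_factorization_of_comap_linearEquiv hπM e, ?_⟩
  rintro ⟨lam, πN, hinj, hsurj, hcomm, hker⟩
  rw [← range_eq_comap_of_comp_eq hsurj hcomm hker]
  exact ⟨(LinearEquiv.ofInjective lam hinj).symm⟩
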